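/- arXiv:2205.08208 — 2 statements merged into one kernel-verified Lean document; each statement's English description precedes it below -/
import Mathlib

section
/- Let Ω be an n×n real symmetric positive definite matrix with least eigenvalue λ_min(Ω). Then γ(Ω, θ) tends to +∞ as θ tends to λ_min(Ω) from below (with θ ranging over [0, λ_min(Ω)), on which Ω − θIₙ is positive definite). -/
/-!
Diagonalising `Ω = U diag(λ) Uᴴ` gives `γ(Ω, θ) = ½ ∑ᵢ h(1 - θ / λᵢ)` with
`h(x) = x⁻¹ - 1 + log x`, which is nonnegative for `x > 0`. Keeping only the term of `λ_min`
bounds `γ(Ω, θ)` below by `½ h(1 - θ / λ_min)`, and `h(x) → ∞` as `x → 0⁺`.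
-/

/-- The function γ(Ω, θ) = (1/2)(tr((I − θΩ⁻¹)⁻¹ − I) + log det(I − θΩ⁻¹)). -/
noncomputable def gammaFn {n : ℕ} (Ω : Matrix (Fin n) (Fin n) ℝ) (θ : ℝ) : ℝ :=
  (1 / 2) * (Matrix.trace ((1 - θ • Ω⁻¹)⁻¹ - 1) + Real.log ((1 - θ • Ω⁻¹).det))

open Filter Topology Real Asymptotics

theorem Real.tendsto_id_sub_log_atTop : Tendsto (fun x : ℝ => x - log x) atTop atTop :=
  ((IsEquivalent.refl.sub_isLittleO isLittleO_log_id_atTop).symm.tendsto_atTop tendsto_id :)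

theorem Real.tendsto_inv_sub_one_add_log_nhdsGT_zero :
    Tendsto (fun x : ℝ => x⁻¹ - 1 + log x) (𝓝[>] 0) atTop := by
  refine (tendsto_atTop_add_const_right _ (-1)
    (tendsto_id_sub_log_atTop.comp tendsto_inv_nhdsGT_zero)).congr fun x => ?_
  simp only [Function.comp_apply, log_inv]
  ring

theorem Real.inv_sub_one_add_log_nonneg {x : ℝ} (hx : 0 < x) : 0 ≤ x⁻¹ - 1 + log x := by
  linarith [one_sub_inv_le_log_of_pos hx]

theorem tendsto_one_sub_div_nhdsLT {c : ℝ} (hc : 0 < c) :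
    Tendsto (fun θ => 1 - θ / c) (𝓝[<] c) (𝓝[>] 0) := by
  have hmaps : Set.MapsTo (fun θ => 1 - θ / c) (Set.Iio c) (Set.Ioi 0) := fun θ hθ => by
    simpa [div_lt_one hc] using hθ
  have hcont : ContinuousWithinAt (fun θ => 1 - θ / c) (Set.Iio c) c := by fun_prop
  simpa [div_self hc.ne'] using hcont.tendsto_nhdsWithin hmaps

namespace Matrix
open Unitary

variable {n α : Type*} [Fintype n] [DecidableEq n] [CommRing α] [StarRing α]

theorem det_conjStarAlgAut (u : unitary (Matrix n n α)) (A : Matrix n n α) :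
    (conjStarAlgAut α _ u A).det = A.det := by
  rw [conjStarAlgAut_apply,
    det_conj_of_mul_eq_one (mul_star_self_of_mem u.2) (star_mul_self_of_mem u.2)]

theorem trace_conjStarAlgAut (u : unitary (Matrix n n α)) (A : Matrix n n α) :
    (conjStarAlgAut α _ u A).trace = A.trace := by
  rw [conjStarAlgAut_apply, trace_mul_cycle, star_mul_self_of_mem u.2, one_mul]

theorem nonsing_inv_conjStarAlgAut (u : unitary (Matrix n n α)) (A : Matrix n n α) :
    (conjStarAlgAut α _ u A)⁻¹ = conjStarAlgAut α _ u A⁻¹ := by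
  rw [conjStarAlgAut_apply, conjStarAlgAut_apply, mul_inv_rev, mul_inv_rev,
    inv_eq_left_inv (mul_star_self_of_mem u.2), inv_eq_left_inv (star_mul_self_of_mem u.2),
    ← mul_assoc]

theorem inv_diagonal_of_ne_zero {K : Type*} [Field K] {v : n → K} (hv : ∀ i, v i ≠ 0) :
    (diagonal v)⁻¹ = diagonal v⁻¹ :=
  inv_eq_left_inv <| by simp [diagonal_mul_diagonal, inv_mul_cancel₀ (hv _)]

theorem IsHermitian.one_sub_smul_inv_eq {A : Matrix n n ℝ} (hA : A.IsHermitian)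
    (hA₀ : ∀ i, hA.eigenvalues i ≠ 0) (θ : ℝ) :
    1 - θ • A⁻¹ = conjStarAlgAut ℝ _ hA.eigenvectorUnitary
      (diagonal fun i => 1 - θ / hA.eigenvalues i) := by
  conv_lhs => rw [hA.spectral_theorem]
  rw [nonsing_inv_conjStarAlgAut, inv_diagonal_of_ne_zero (by simpa using hA₀), ← map_smul,
    ← map_one (conjStarAlgAut ℝ _ hA.eigenvectorUnitary), ← map_sub]
  congr 1
  ext i j
  by_cases h : i = j <;> simp [h, div_eq_mul_inv]

end Matrix

open Matrix in
theorem gammaFn_eq_sum {n : ℕ} {Ω : Matrix (Fin n) (Fin n) ℝ} (hΩ : Ω.IsHermitian)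
    (hΩ₀ : ∀ i, hΩ.eigenvalues i ≠ 0) {θ : ℝ}
    (hθ : ∀ i, 1 - θ / hΩ.eigenvalues i ≠ 0) :
    gammaFn Ω θ = (1 / 2) * ∑ i, ((1 - θ / hΩ.eigenvalues i)⁻¹ - 1
      + log (1 - θ / hΩ.eigenvalues i)) := by
  rw [gammaFn, hΩ.one_sub_smul_inv_eq hΩ₀, nonsing_inv_conjStarAlgAut,
    inv_diagonal_of_ne_zero hθ, trace_sub, trace_one, trace_conjStarAlgAut, trace_diagonal,
    det_conjStarAlgAut, det_diagonal, log_prod fun i _ => hθ i, Finset.sum_add_distrib, Finset.sum_sub_distrib]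
  simp

theorem le_gammaFn_of_lt_eigenvalues {n : ℕ} {Ω : Matrix (Fin n) (Fin n) ℝ} (hΩ : Ω.PosDef)
    {θ : ℝ} (hθ : ∀ i, θ < hΩ.1.eigenvalues i) (j : Fin n) :
    (1 / 2) * ((1 - θ / hΩ.1.eigenvalues j)⁻¹ - 1 + log (1 - θ / hΩ.1.eigenvalues j))
      ≤ gammaFn Ω θ := by
  have hd : ∀ i, 0 < 1 - θ / hΩ.1.eigenvalues i := fun i =>
    sub_pos.2 <| (div_lt_one (hΩ.eigenvalues_pos i)).2 (hθ i)
  rw [gammaFn_eq_sum hΩ.1 (fun i => (hΩ.eigenvalues_pos i).ne') fun i => (hd i).ne']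
  gcongr
  exact Finset.single_le_sum (fun i _ => inv_sub_one_add_log_nonneg (hd i)) (Finset.mem_univ j)

theorem stmt2_general {n : ℕ} (Ω : Matrix (Fin n) (Fin n) ℝ)
    (hΩ : Ω.PosDef) (lmin : ℝ)
    (hlmin : lmin = ⨅ i : Fin n, hΩ.1.eigenvalues i) :
    Filter.Tendsto (fun θ => gammaFn Ω θ)
      (nhdsWithin lmin (Set.Ico 0 lmin)) Filter.atTop := by
  rcases isEmpty_or_nonempty (Fin n) with hn | hn
  -- for `n = 0` the infimum takes the junk value `0`, so the filter is `⊥`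
  · have hlmin₀ : lmin = 0 := by simp [hlmin]
    simp [hlmin₀]
  obtain ⟨j, hj⟩ := exists_eq_ciInf_of_finite (f := hΩ.1.eigenvalues)
  have hmin : ∀ i, lmin ≤ hΩ.1.eigenvalues i := fun i =>
    hlmin ▸ ciInf_le (Finite.bddBelow_range _) i
  have hpos : 0 < lmin := hlmin ▸ hj ▸ hΩ.eigenvalues_pos j
  have hdist : Tendsto (fun θ => 1 - θ / lmin) (𝓝[Set.Ico 0 lmin] lmin) (𝓝[>] 0) :=
    (tendsto_one_sub_div_nhdsLT hpos).mono_left (nhdsWithin_mono _ Set.Ico_subset_Iio_self)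
  refine tendsto_atTop_mono' _ ?_
    ((tendsto_inv_sub_one_add_log_nhdsGT_zero.comp hdist).const_mul_atTop one_half_pos)
  filter_upwards [self_mem_nhdsWithin] with θ hθ
  have := le_gammaFn_of_lt_eigenvalues hΩ (fun i => hθ.2.trans_le (hmin i)) j
  rwa [hj, ← hlmin] at this

theorem stmt2 {n : ℕ} (hn : 0 < n) (Ω : Matrix (Fin n) (Fin n) ℝ)
    (hΩ : Ω.PosDef) (lmin : ℝ)
    (hlmin : lmin = ⨅ i : Fin n, hΩ.1.eigenvalues i) :
    Filter.Tendsto (fun θ => gammaFn Ω θ)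
      (nhdsWithin lmin (Set.Ico 0 lmin)) Filter.atTop :=
  stmt2_general Ω hΩ lmin hlmin
end

section
/- Let Ω₁ and Ω₂ be n×n real symmetric positive definite matrices with Ω₂ ⪯ Ω₁ (Loewner order), and let θ ≥ 0 be such that Ω₂ − θIₙ is positive definite (hence also Ω₁ − θIₙ). Then γ(Ω₁, θ) ≤ γ(Ω₂, θ); that is, for fixed θ the function γ is monotone nonincreasing in Ω with respect to the Loewner order. -/
/-!
If μᵢ are the eigenvalues of Ω, then γ(Ω, θ) = ½ Σᵢ (θ/(μᵢ - θ) + log(μᵢ - θ) - log μᵢ),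
and each summand is ∫₀^θ s (μᵢ - s)⁻² ds. Hence γ(Ω, θ) = ½ ∫₀^θ s · tr((Ω - sI)⁻²) ds.
For s ∈ [0, θ] we have 0 ≺ Ω₂ - sI ⪯ Ω₁ - sI, so (Ω₁ - sI)⁻¹ ⪯ (Ω₂ - sI)⁻¹ because inversion
is operator antitone, and A ↦ tr(A²) is monotone on positive semidefinite matrices; so the
integrands compare pointwise.
-/

open Matrix Real
open scoped MatrixOrder ComplexOrder

namespace Matrix

variable {n 𝕜 : Type*} [DecidableEq n] [RCLike 𝕜]

lemma PosDef.sub_smul_one_of_le {A : Matrix n n 𝕜} {θ s : ℝ} (h : (A - θ • 1).PosDef)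
    (hs : s ≤ θ) : (A - s • 1).PosDef := by
  have hθs : ((θ - s) • (1 : Matrix n n 𝕜)).PosSemidef := PosSemidef.one.smul (sub_nonneg.mpr hs)
  convert h.add_posSemidef hθs using 1
  rw [sub_smul]
  abel

variable [Fintype n]

lemma PosSemidef.trace_mul_nonneg {A B : Matrix n n 𝕜} (hA : A.PosSemidef)
    (hB : B.PosSemidef) : 0 ≤ (A * B).trace := by
  obtain ⟨S, rfl⟩ := CStarAlgebra.nonneg_iff_eq_star_mul_self.mp hA.nonneg
  rw [mul_assoc, trace_mul_comm]
  exact (hB.mul_mul_conjTranspose_same S).trace_nonneg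

lemma trace_sq_le_trace_sq {A B : Matrix n n 𝕜} (hA : 0 ≤ A) (hAB : A ≤ B) :
    (A ^ 2).trace ≤ (B ^ 2).trace := by
  have hBA : (B - A).PosSemidef := hAB
  have hB : B.PosSemidef := (hA.trans hAB).posSemidef
  have hdiff : (B ^ 2).trace - (A ^ 2).trace = ((B - A) * A).trace + (B * (B - A)).trace := by
    rw [← trace_sub, ← trace_add]
    congr 1
    noncomm_ring
  rw [← sub_nonneg, hdiff]
  exact add_nonneg (hBA.trace_mul_nonneg hA.posSemidef) (hB.trace_mul_nonneg hBA)

/-- The Schur complements of `[[B, 1], [1, A⁻¹]]` with respect to its two diagonal blocks are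
`B - A` and `A⁻¹ - B⁻¹`, so one is positive semidefinite iff the other is. -/
lemma PosDef.inv_le_inv {A B : Matrix n n 𝕜} (hA : A.PosDef) (hAB : A ≤ B) : B⁻¹ ≤ A⁻¹ := by
  have hB : B.PosDef := by simpa using hA.add_posSemidef hAB
  let _ := hA.isUnit.invertible
  let _ := hB.isUnit.invertible
  rw [le_iff] at hAB ⊢
  have hblock : (fromBlocks B 1 1 A⁻¹).PosSemidef := by
    simpa using (PosDef.fromBlocks₂₂ B (1 : Matrix n n 𝕜) hA.inv).mpr (by simpa using hAB)
  simpa using (PosDef.fromBlocks₁₁ (1 : Matrix n n 𝕜) A⁻¹ hB).mp (by simpa using hblock)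

lemma IsHermitian.trace_cfc {A : Matrix n n 𝕜} (hA : A.IsHermitian) (f : ℝ → ℝ) :
    (cfc f A).trace = ∑ i, (f (hA.eigenvalues i) : 𝕜) := by
  rw [hA.cfc_eq, IsHermitian.cfc, Unitary.conjStarAlgAut_apply, trace_mul_cycle,
    Unitary.coe_star_mul_self, one_mul, trace_diagonal]
  rfl

lemma IsHermitian.det_cfc {A : Matrix n n 𝕜} (hA : A.IsHermitian) (f : ℝ → ℝ) :
    (cfc f A).det = ∏ i, (f (hA.eigenvalues i) : 𝕜) := by
  rw [hA.cfc_eq, IsHermitian.cfc, Unitary.conjStarAlgAut_apply, det_mul_right_comm,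
    Unitary.mul_star_self_of_mem hA.eigenvectorUnitary.prop, one_mul, det_diagonal]
  rfl

lemma cfc_inv_eq_inv {A : Matrix n n 𝕜} (f : ℝ → ℝ) (hf : ∀ x ∈ spectrum ℝ A, f x ≠ 0)
    (hA : IsSelfAdjoint A := by cfc_tac) : cfc (fun x ↦ (f x)⁻¹) A = (cfc f A)⁻¹ := by
  rw [cfc_inv f A hf (A.finite_real_spectrum.continuousOn f), nonsing_inv_eq_ringInverse]

lemma cfc_sub_const (A : Matrix n n 𝕜) (s : ℝ) (hA : IsSelfAdjoint A := by cfc_tac) :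
    cfc (fun x ↦ x - s) A = A - s • 1 := by
  rw [cfc_sub .., cfc_id' .., cfc_const .., Algebra.algebraMap_eq_smul_one]

lemma cfc_inv_sub_pow {A : Matrix n n 𝕜} {s : ℝ} (hs : s ∉ spectrum ℝ A) (k : ℕ)
    (hA : IsSelfAdjoint A := by cfc_tac) :
    cfc (fun x ↦ (x - s)⁻¹ ^ k) A = (A - s • 1)⁻¹ ^ k := by
  rw [cfc_pow _ _ _ (A.finite_real_spectrum.continuousOn _), cfc_inv_eq_inv, cfc_sub_const A s]
  rintro x hx h
  exact hs (sub_eq_zero.mp h ▸ hx)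

lemma IsHermitian.det_sub_smul_one {A : Matrix n n 𝕜} (hA : A.IsHermitian) (s : ℝ) :
    (A - s • 1).det = ∏ i, ((hA.eigenvalues i - s : ℝ) : 𝕜) := by
  rw [← cfc_sub_const A s hA, hA.det_cfc]

lemma IsHermitian.trace_inv_sub_smul_one_pow {A : Matrix n n 𝕜} (hA : A.IsHermitian) {s : ℝ}
    (hs : s ∉ spectrum ℝ A) (k : ℕ) :
    ((A - s • 1)⁻¹ ^ k).trace = ∑ i, (((hA.eigenvalues i - s)⁻¹ ^ k : ℝ) : 𝕜) := by
  rw [← cfc_inv_sub_pow hs k hA, hA.trace_cfc]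

end Matrix

lemma continuousOn_mul_inv_sub_sq {θ x : ℝ} (hθ : 0 ≤ θ) (hx : θ < x) :
    ContinuousOn (fun s ↦ s * (x - s)⁻¹ ^ 2) (Set.uIcc 0 θ) := by
  rw [Set.uIcc_of_le hθ]
  refine continuousOn_id.mul (((continuousOn_const.sub continuousOn_id).inv₀ ?_).pow 2)
  intro s hs
  exact sub_ne_zero.mpr (hs.2.trans_lt hx).ne'

lemma integral_mul_inv_sub_sq {θ x : ℝ} (hθ : 0 ≤ θ) (hx : θ < x) :
    ∫ s in 0..θ, s * (x - s)⁻¹ ^ 2 = θ * (x - θ)⁻¹ + (log (x - θ) - log x) := by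
  have hderiv : ∀ s ∈ Set.uIcc 0 θ,
      HasDerivAt (fun s ↦ s * (x - s)⁻¹ + log (x - s)) (s * (x - s)⁻¹ ^ 2) s := by
    intro s hs
    rw [Set.uIcc_of_le hθ] at hs
    have hxs : x - s ≠ 0 := by linarith [hs.2]
    have hsub := (hasDerivAt_id' s).const_sub x
    refine (((hasDerivAt_id' s).mul (hsub.inv hxs)).add (hsub.log hxs)).congr_deriv ?_
    simp only [Pi.inv_apply]
    field_simp
    ring
  rw [intervalIntegral.integral_eq_sub_of_hasDerivAt hderiv
    (continuousOn_mul_inv_sub_sq hθ hx).intervalIntegrable]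
  simp only [zero_mul, sub_zero, zero_add]
  ring

namespace Matrix

variable {n : Type*} [Fintype n] [DecidableEq n] {A : Matrix n n ℝ} {θ : ℝ}

lemma PosDef.lt_of_mem_spectrum {x : ℝ} (h : (A - θ • 1).PosDef) (hx : x ∈ spectrum ℝ A) :
    θ < x := by
  have hx' : x - θ ∈ spectrum ℝ (A - θ • 1) := by
    rw [← Algebra.algebraMap_eq_smul_one, ← spectrum.sub_singleton_eq]
    exact Set.sub_mem_sub hx rfl
  exact sub_pos.mp (h.isStrictlyPositive.spectrum_pos hx')

lemma IsHermitian.eqOn_mul_trace_inv_sub_smul_one_sq (hA : A.IsHermitian)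
    (h : (A - θ • 1).PosDef) :
    Set.EqOn (fun s ↦ s * ((A - s • 1)⁻¹ ^ 2).trace)
      (fun s ↦ ∑ i, s * (hA.eigenvalues i - s)⁻¹ ^ 2) (Set.Iic θ) := by
  intro s hs
  have hs' : s ∉ spectrum ℝ A := fun hmem ↦ (Set.mem_Iic.mp hs).not_gt (h.lt_of_mem_spectrum hmem)
  simp only
  rw [hA.trace_inv_sub_smul_one_pow hs', Finset.mul_sum]
  rfl

lemma PosDef.intervalIntegrable_mul_trace_inv_sub_smul_one_sq (h : (A - θ • 1).PosDef)
    (hθ : 0 ≤ θ) :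
    IntervalIntegrable (fun s ↦ s * ((A - s • 1)⁻¹ ^ 2).trace) MeasureTheory.volume 0 θ := by
  have hA : A.IsHermitian := by simpa using (h.sub_smul_one_of_le hθ).isHermitian
  have hμ i : θ < hA.eigenvalues i := h.lt_of_mem_spectrum (hA.eigenvalues_mem_spectrum_real i)
  refine ContinuousOn.intervalIntegrable ?_
  exact (continuousOn_finsetSum _ fun i _ ↦ continuousOn_mul_inv_sub_sq hθ (hμ i)).congr
    ((hA.eqOn_mul_trace_inv_sub_smul_one_sq h).mono (Set.uIcc_of_le hθ ▸ Set.Icc_subset_Iic_self))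

end Matrix

lemma gammaFn_eq {n : ℕ} {Ω : Matrix (Fin n) (Fin n) ℝ} {θ : ℝ} (hΩ : IsUnit Ω)
    (hΩθ : IsUnit (Ω - θ • 1)) :
    gammaFn Ω θ = (1 / 2) * (θ * ((Ω - θ • 1)⁻¹).trace + (log (Ω - θ • 1).det - log Ω.det)) := by
  have hdet := (isUnit_iff_isUnit_det _).mp hΩ
  have hdetθ := (isUnit_iff_isUnit_det _).mp hΩθ
  have hfactor : 1 - θ • Ω⁻¹ = (Ω - θ • 1) * Ω⁻¹ := by
    rw [sub_mul, mul_nonsing_inv _ hdet, smul_mul, one_mul]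
  have hinv : (1 - θ • Ω⁻¹)⁻¹ - 1 = θ • (Ω - θ • 1)⁻¹ := by
    rw [hfactor, Matrix.mul_inv_rev, nonsing_inv_nonsing_inv _ hdet]
    nth_rw 1 [← sub_add_cancel Ω (θ • 1)]
    rw [add_mul, mul_nonsing_inv _ hdetθ, smul_mul, one_mul, add_sub_cancel_left]
  rw [gammaFn, hinv, hfactor, det_mul, det_nonsing_inv, Ring.inverse_eq_inv',
    log_mul hdetθ.ne_zero (inv_ne_zero hdet.ne_zero), log_inv, trace_smul, smul_eq_mul]
  ring

lemma gammaFn_eq_integral {n : ℕ} {Ω : Matrix (Fin n) (Fin n) ℝ} {θ : ℝ} (hθ : 0 ≤ θ)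
    (h : (Ω - θ • 1).PosDef) :
    gammaFn Ω θ = (1 / 2) * ∫ s in 0..θ, s * ((Ω - s • 1)⁻¹ ^ 2).trace := by
  have hΩ : Ω.PosDef := by simpa using h.sub_smul_one_of_le hθ
  have hH := hΩ.isHermitian
  have hμ i : θ < hH.eigenvalues i := h.lt_of_mem_spectrum (hH.eigenvalues_mem_spectrum_real i)
  have hpos i : 0 < hH.eigenvalues i := hθ.trans_lt (hμ i)
  have hθ' : θ ∉ spectrum ℝ Ω := fun hmem ↦ (h.lt_of_mem_spectrum hmem).false
  have hint : ∫ s in 0..θ, s * ((Ω - s • 1)⁻¹ ^ 2).trace = ∑ i,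
      (θ * (hH.eigenvalues i - θ)⁻¹ + (log (hH.eigenvalues i - θ) - log (hH.eigenvalues i))) := by
    rw [intervalIntegral.integral_congr ((hH.eqOn_mul_trace_inv_sub_smul_one_sq h).mono
        (Set.uIcc_of_le hθ ▸ Set.Icc_subset_Iic_self)),
      intervalIntegral.integral_finsetSum
        fun i _ ↦ (continuousOn_mul_inv_sub_sq hθ (hμ i)).intervalIntegrable]
    exact Finset.sum_congr rfl fun i _ ↦ integral_mul_inv_sub_sq hθ (hμ i)
  rw [hint, gammaFn_eq hΩ.isUnit h.isUnit, ← pow_one (Ω - θ • 1)⁻¹,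
    hH.trace_inv_sub_smul_one_pow hθ', hH.det_sub_smul_one, hH.det_eq_prod_eigenvalues]
  simp only [RCLike.ofReal_real_eq_id, id, pow_one]
  rw [log_prod fun i _ ↦ (sub_pos.mpr (hμ i)).ne', log_prod fun i _ ↦ (hpos i).ne',
    Finset.mul_sum, ← Finset.sum_sub_distrib, ← Finset.sum_add_distrib]

theorem stmt6_general {n : ℕ} (Ω₁ Ω₂ : Matrix (Fin n) (Fin n) ℝ)
    (h21 : (Ω₁ - Ω₂).PosSemidef) (θ : ℝ) (hθ : 0 ≤ θ)
    (hpd : (Ω₂ - θ • (1 : Matrix (Fin n) (Fin n) ℝ)).PosDef) :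
    gammaFn Ω₁ θ ≤ gammaFn Ω₂ θ := by
  have hpd₁ : (Ω₁ - θ • 1).PosDef := by simpa using hpd.add_posSemidef h21
  rw [gammaFn_eq_integral hθ hpd₁, gammaFn_eq_integral hθ hpd]
  refine mul_le_mul_of_nonneg_left (intervalIntegral.integral_mono_on hθ
    (hpd₁.intervalIntegrable_mul_trace_inv_sub_smul_one_sq hθ)
    (hpd.intervalIntegrable_mul_trace_inv_sub_smul_one_sq hθ) fun s hs ↦ ?_) (by norm_num)
  have hΩ₁s : (Ω₁ - s • 1).PosDef := hpd₁.sub_smul_one_of_le hs.2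
  have hΩ₂s : (Ω₂ - s • 1).PosDef := hpd.sub_smul_one_of_le hs.2
  have hle : Ω₂ - s • 1 ≤ Ω₁ - s • 1 := by simpa [le_iff] using h21
  exact mul_le_mul_of_nonneg_left
    (trace_sq_le_trace_sq hΩ₁s.inv.posSemidef.nonneg (hΩ₂s.inv_le_inv hle)) hs.1

theorem stmt6 {n : ℕ} (Ω₁ Ω₂ : Matrix (Fin n) (Fin n) ℝ)
    (h₁ : Ω₁.PosDef) (h₂ : Ω₂.PosDef)
    (h21 : (Ω₁ - Ω₂).PosSemidef) (θ : ℝ) (hθ : 0 ≤ θ)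
    (hpd : (Ω₂ - θ • (1 : Matrix (Fin n) (Fin n) ℝ)).PosDef) :
    gammaFn Ω₁ θ ≤ gammaFn Ω₂ θ :=
  stmt6_general Ω₁ Ω₂ h21 θ hθ hpd
end
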